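/- For every 0 < ε < 1/2 there exists a constant 0 < C_ε < ∞, depending only on ε, such that for every discrete-time Markov transition kernel g on a σ-compact metric state space with stationary distribution π, the mixing time of the lazy kernel satisfies t_L(ε) ≤ C_ε · t_m(ε). -/

import Mathlib

open MeasureTheory ENNReal

noncomputable section

namespace MixHit

variable {X : Type*} [MeasurableSpace X]

/-- Total variation distance between two Borel measures. -/
def tv (μ ν : Measure X) : ℝ≥0∞ :=
  ⨆ (A : Set X) (_ : MeasurableSet A), (μ A - ν A) ⊔ (ν A - μ A)

/-- `g` is a Markov transition kernel: each `g x` is a (Borel) probability measure,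
measurably in `x`. -/
def IsMarkov (g : X → Measure X) : Prop :=
  (∀ x, IsProbabilityMeasure (g x)) ∧
    ∀ A : Set X, MeasurableSet A → Measurable fun x => g x A

/-- `t`-step transition probabilities (`iterK g 0 x = δ_x`). -/
def iterK (g : X → Measure X) : ℕ → X → Measure X
  | 0 => fun x => Measure.dirac x
  | n + 1 => fun x => (g x).bind (iterK g n)

/-- `π` is a stationary distribution for `g`. -/
def Stationary (g : X → Measure X) (π : Measure X) : Prop :=
  ∀ A : Set X, MeasurableSet A → ∫⁻ x, g x A ∂π = π A

/-- `g` is reversible with respect to `π`. -/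
def Reversible (g : X → Measure X) (π : Measure X) : Prop :=
  ∀ A B : Set X, MeasurableSet A → MeasurableSet B →
    ∫⁻ x in A, g x B ∂π = ∫⁻ x in B, g x A ∂π

/-- The lazy kernel `g_L(x,·) = (1/2) g(x,·) + (1/2) δ_x`. -/
def lazy (g : X → Measure X) : X → Measure X := fun x =>
  (2 : ℝ≥0∞)⁻¹ • g x + (2 : ℝ≥0∞)⁻¹ • Measure.dirac x

/-- Mixing time `min {t : sup_x ‖g^t(x,·) − π‖ ≤ ε}`, as an element of `ℝ≥0∞`
(`⊤` if there is no such `t`). -/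
def mixTime (g : X → Measure X) (π : Measure X) (ε : ℝ≥0∞) : ℝ≥0∞ :=
  ⨅ (t : ℕ) (_ : ∀ x, tv (iterK g t x) π ≤ ε), (t : ℝ≥0∞)

/-- `d̄(t) = sup_{x,y} ‖g^t(x,·) − g^t(y,·)‖`. -/
def dbar (g : X → Measure X) (t : ℕ) : ℝ≥0∞ :=
  ⨆ (x : X) (y : X), tv (iterK g t x) (iterK g t y)

/-- Standardized mixing time `min {t : d̄(t) ≤ ε}` (`⊤` if there is no such `t`). -/
def stdMix (g : X → Measure X) (ε : ℝ≥0∞) : ℝ≥0∞ :=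
  ⨅ (t : ℕ) (_ : dbar g t ≤ ε), (t : ℝ≥0∞)

/-- `P_x(τ_A = t)` for the chain with kernel `g` started at `x`, where
`τ_A = min {t : X_t ∈ A}` (first-step recursion). -/
def hitEq (g : X → Measure X) (A : Set X) : ℕ → X → ℝ≥0∞
  | 0 => fun x => A.indicator (fun _ => 1) x
  | n + 1 => fun x => Aᶜ.indicator (fun x' => ∫⁻ y, hitEq g A n y ∂(g x')) x

/-- `P_x(τ_A ≤ t)`. -/
def hitLE (g : X → Measure X) (A : Set X) (t : ℕ) (x : X) : ℝ≥0∞ :=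
  ∑ s ∈ Finset.range (t + 1), hitEq g A s x

/-- `E_x[τ_A] = ∑_{t ≥ 0} P_x(τ_A > t)`. -/
def expHit (g : X → Measure X) (A : Set X) (x : X) : ℝ≥0∞ :=
  ∑' t : ℕ, (1 - hitLE g A t x)

/-- Maximum hitting time `t_H(α) = sup {E_x[τ_A] : x ∈ X, A Borel, π(A) ≥ α}`. -/
def maxHit (g : X → Measure X) (π : Measure X) (α : ℝ) : ℝ≥0∞ :=
  ⨆ (x : X) (A : Set X) (_ : MeasurableSet A) (_ : ENNReal.ofReal α ≤ π A),
    expHit g A x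

/-- Large hitting time
`τ_g(α) = min {t : inf {P_x(τ_A ≤ t) : x ∈ X, A Borel, π(A) ≥ α} > 0.9}`. -/
def largeHit (g : X → Measure X) (π : Measure X) (α : ℝ) : ℝ≥0∞ :=
  ⨅ (t : ℕ) (_ : (9 / 10 : ℝ≥0∞) <
      ⨅ (x : X) (A : Set X) (_ : MeasurableSet A) (_ : ENNReal.ofReal α ≤ π A),
        hitLE g A t x),
    (t : ℝ≥0∞)

/-- The strong Feller property: continuity of `x ↦ g(x,·)` in total variation. -/
def StrongFeller [PseudoMetricSpace X] (g : X → Measure X) : Prop :=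
  ∀ x : X, ∀ ε : ℝ, 0 < ε → ∃ δ : ℝ, 0 < δ ∧
    ∀ y : X, dist y x < δ → tv (g x) (g y) < ENNReal.ofReal ε

/-- Law of `X_t` on the event that `t` is the first time the chain lies in `S`. -/
def enterDist (g : X → Measure X) (S : Set X) : ℕ → X → Measure X
  | 0 => fun x => (Measure.dirac x).restrict S
  | n + 1 => fun x => Sᶜ.indicator (fun x' => (g x').bind (enterDist g S n)) x

/-- Law of the chain's position at its first entrance (at a time `≥ 0`) into `S`. -/
def hitMeasure (g : X → Measure X) (S : Set X) (x : X) : Measure X :=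
  Measure.sum fun t => enterDist g S t x

/-- One step of the trace of `g` on `S`: take one `g`-step, then run until the
first entrance into `S`. -/
def traceK (g : X → Measure X) (S : Set X) : X → Measure X :=
  fun x => (g x).bind (hitMeasure g S)

/-- The trace of `g` on `S`, viewed as a kernel on the subtype `S`. -/
def traceSub (g : X → Measure X) (S : Set X) : S → Measure S :=
  fun x => (traceK g S (x : X)).comap (Subtype.val)

/-- Normalization of `π` to `S`, as a measure on the subtype `S`. -/
def normSub (π : Measure X) (S : Set X) : Measure S :=
  (π S)⁻¹ • π.comap (Subtype.val : S → X)

/-- Ergodicity: from every starting point, the chain converges to `π`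
in total variation. -/
def ErgodicK (g : X → Measure X) (π : Measure X) : Prop :=
  Stationary g π ∧
    ∀ x : X, Filter.Tendsto (fun t => tv (iterK g t x) π) Filter.atTop (nhds 0)

/-!
Running the lazy chain for `T` steps amounts to running `g` for a `Bin(T, 1/2)` number of steps,
so `‖g_L^T(x,·) − π‖` is at most the binomial average of `‖g^k(x,·) − π‖`. Let `t = t_m(ε)` and
`T = m t`. By Chebyshev, fewer than `j t ≤ T / 4` steps are made with probability at most
`4 / T ≤ ε / 2`. Otherwise the distance is at most `d̄(j t)`, where
`d̄(t) = sup_{x,y} ‖g^t(x,·) − g^t(y,·)‖` is submultiplicative (a coupling argument through the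
Hahn decomposition) and `d̄(t) ≤ 2ε`; so `d̄(j t) ≤ (2ε)^j ≤ ε / 2`. Both `j` and `m` depend only
on `ε`.
-/

open Finset

variable {g : X → Measure X}

section TotalVariation

variable {μ ν : Measure X} {c : ℝ≥0∞}

lemma tv_le (h₁ : ∀ A, MeasurableSet A → μ A - ν A ≤ c)
    (h₂ : ∀ A, MeasurableSet A → ν A - μ A ≤ c) : tv μ ν ≤ c :=
  iSup₂_le fun A hA => sup_le (h₁ A hA) (h₂ A hA)

lemma sub_le_tv {A : Set X} (hA : MeasurableSet A) : μ A - ν A ≤ tv μ ν :=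
  le_sup_left.trans <| le_iSup₂ (f := fun A (_ : MeasurableSet A) => (μ A - ν A) ⊔ (ν A - μ A)) A hA

lemma tv_comm (μ ν : Measure X) : tv μ ν = tv ν μ := by
  simp only [tv, sup_comm]

lemma sub_le_tv' {A : Set X} (hA : MeasurableSet A) : ν A - μ A ≤ tv μ ν :=
  tv_comm μ ν ▸ sub_le_tv hA

lemma tv_le_one [IsProbabilityMeasure μ] [IsProbabilityMeasure ν] : tv μ ν ≤ 1 :=
  tv_le (fun _ _ => tsub_le_self.trans prob_le_one) (fun _ _ => tsub_le_self.trans prob_le_one)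

lemma tv_triangle (μ ν ρ : Measure X) : tv μ ρ ≤ tv μ ν + tv ν ρ := by
  refine tv_le (fun A hA => ?_) (fun A hA => ?_)
  · exact tsub_le_tsub_add_tsub.trans (add_le_add (sub_le_tv hA) (sub_le_tv hA))
  · rw [add_comm]
    exact tsub_le_tsub_add_tsub.trans (add_le_add (sub_le_tv' hA) (sub_le_tv' hA))

lemma tv_le_sum_mul {ι : Type*} {s : Finset ι} {w : ι → ℝ≥0∞} {μs : ι → Measure X}
    (hw : ∑ i ∈ s, w i = 1) (hμ : ∀ A, MeasurableSet A → μ A = ∑ i ∈ s, w i * μs i A) :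
    tv μ ν ≤ ∑ i ∈ s, w i * tv (μs i) ν := by
  have hν (A : Set X) : ν A = ∑ i ∈ s, w i * ν A := by rw [← sum_mul, hw, one_mul]
  have key {a b : ι → ℝ≥0∞} (hab : ∀ i, a i - b i ≤ tv (μs i) ν) :
      ∑ i ∈ s, w i * a i - ∑ i ∈ s, w i * b i ≤ ∑ i ∈ s, w i * tv (μs i) ν := by
    rw [tsub_le_iff_right, ← sum_add_distrib]
    refine sum_le_sum fun i _ => ?_
    rw [← mul_add]
    exact mul_le_mul_right (tsub_le_iff_right.mp (hab i)) _
  refine tv_le (fun A hA => ?_) (fun A hA => ?_)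
  · rw [hμ A hA, hν A]
    exact key fun i => sub_le_tv hA
  · rw [hμ A hA, hν A]
    exact key fun i => sub_le_tv' hA

end TotalVariation

section Contraction

lemma lintegral_sub_lintegral_le {μ ν : Measure X} {c D : ℝ≥0∞} (hμ : μ Set.univ = c)
    (hν : ν Set.univ = c) {f : X → ℝ≥0∞} (hf : ∀ x y, f x ≤ f y + D) :
    ∫⁻ x, f x ∂μ - ∫⁻ x, f x ∂ν ≤ c * D := by
  have upper : ∫⁻ x, f x ∂μ ≤ ((⨅ y, f y) + D) * c := by
    refine (lintegral_mono fun x => ?_).trans (by rw [lintegral_const, hμ])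
    rw [ENNReal.iInf_add]
    exact le_iInf fun y => hf x y
  have lower : (⨅ y, f y) * c ≤ ∫⁻ x, f x ∂ν := by
    rw [← hν, ← lintegral_const]
    exact lintegral_mono fun x => iInf_le f x
  rw [tsub_le_iff_right]
  calc ∫⁻ x, f x ∂μ ≤ (⨅ y, f y) * c + c * D := by rwa [add_mul, mul_comm D] at upper
    _ ≤ c * D + ∫⁻ x, f x ∂ν := by rw [add_comm]; gcongr

lemma exists_eq_add_common (μ ν : Measure X) [IsProbabilityMeasure μ] [IsProbabilityMeasure ν] :
    ∃ μ' ν' ρ : Measure X, μ = μ' + ρ ∧ ν = ν' + ρ ∧ ν' Set.univ = μ' Set.univ ∧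
      μ' Set.univ ≤ tv μ ν := by
  obtain ⟨s, hs, hνμ, hμν⟩ := hahn_decomposition μ ν
  have hle₁ : ν.restrict s ≤ μ.restrict s := Measure.le_iff.2 fun A hA => by
    simpa only [Measure.restrict_apply hA] using hνμ _ (hA.inter hs) Set.inter_subset_right
  have hle₂ : μ.restrict sᶜ ≤ ν.restrict sᶜ := Measure.le_iff.2 fun A hA => by
    simpa only [Measure.restrict_apply hA] using hμν _ (hA.inter hs.compl) Set.inter_subset_right
  refine ⟨μ.restrict s - ν.restrict s, ν.restrict sᶜ - μ.restrict sᶜ,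
    ν.restrict s + μ.restrict sᶜ, ?_, ?_, ?_, ?_⟩
  · rw [← add_assoc, Measure.sub_add_cancel_of_le hle₁, Measure.restrict_add_restrict_compl hs]
  · rw [add_comm (ν.restrict s), ← add_assoc, Measure.sub_add_cancel_of_le hle₂, add_comm,
      Measure.restrict_add_restrict_compl hs]
  · rw [Measure.sub_apply .univ hle₁, Measure.sub_apply .univ hle₂]
    simp only [Measure.restrict_apply_univ, prob_compl_eq_one_sub hs]
    exact ENNReal.sub_sub_sub_cancel_left one_ne_top prob_le_one
  · rw [Measure.sub_apply .univ hle₁]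
    simpa only [Measure.restrict_apply_univ] using sub_le_tv hs

lemma tv_bind_le {μ ν : Measure X} [IsProbabilityMeasure μ] [IsProbabilityMeasure ν]
    {h : X → Measure X} (hh : Measurable h) {D : ℝ≥0∞} (hD : ∀ x y, tv (h x) (h y) ≤ D) :
    tv (μ.bind h) (ν.bind h) ≤ tv μ ν * D := by
  obtain ⟨μ', ν', ρ, rfl, rfl, hmass, hμ'⟩ := exists_eq_add_common μ ν
  have hosc (A : Set X) (hA : MeasurableSet A) (x y : X) : h x A ≤ h y A + D :=
    tsub_le_iff_left.mp ((sub_le_tv hA).trans (hD x y))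
  have hbind (κ : Measure X) (A : Set X) (hA : MeasurableSet A) :
      (κ + ρ).bind h A = ∫⁻ x, h x A ∂κ + ∫⁻ x, h x A ∂ρ := by
    rw [Measure.bind_apply hA hh.aemeasurable, lintegral_add_measure]
  refine tv_le (fun A hA => ?_) (fun A hA => ?_)
  · rw [hbind _ A hA, hbind _ A hA]
    exact add_tsub_add_le_tsub_right.trans <|
      (lintegral_sub_lintegral_le rfl hmass (hosc A hA)).trans (mul_le_mul_left hμ' D)
  · rw [hbind _ A hA, hbind _ A hA]
    exact add_tsub_add_le_tsub_right.trans <|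
      (lintegral_sub_lintegral_le hmass rfl (hosc A hA)).trans (mul_le_mul_left hμ' D)

end Contraction

section Markov

lemma IsMarkov.measurable (hg : IsMarkov g) : Measurable g :=
  Measure.measurable_of_measurable_coe g hg.2

lemma IsMarkov.measurable_iterK (hg : IsMarkov g) : ∀ n, Measurable (iterK g n)
  | 0 => Measure.measurable_dirac
  | n + 1 => (Measure.measurable_bind' (hg.measurable_iterK n)).comp hg.measurable

lemma IsMarkov.measurable_iterK_apply (hg : IsMarkov g) (n : ℕ) {A : Set X}
    (hA : MeasurableSet A) : Measurable fun x => iterK g n x A :=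
  (Measure.measurable_coe hA).comp (hg.measurable_iterK n)

lemma IsMarkov.isProbabilityMeasure_iterK (hg : IsMarkov g) :
    ∀ n x, IsProbabilityMeasure (iterK g n x)
  | 0, x => by rw [iterK]; infer_instance
  | n + 1, x =>
    have := hg.1 x
    isProbabilityMeasure_bind (hg.measurable_iterK n).aemeasurable
      (.of_forall (hg.isProbabilityMeasure_iterK n))

lemma IsMarkov.iterK_add (hg : IsMarkov g) (s t : ℕ) (x : X) :
    iterK g (s + t) x = (iterK g s x).bind (iterK g t) := by
  induction s generalizing x with
  | zero => rw [Nat.zero_add, iterK, Measure.dirac_bind (hg.measurable_iterK t)]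
  | succ s ih =>
    rw [Nat.add_right_comm, iterK, iterK, funext ih,
      Measure.bind_bind (hg.measurable_iterK s).aemeasurable (hg.measurable_iterK t).aemeasurable]

lemma Stationary.bind_iterK {π : Measure X} (hπ : Stationary g π) (hg : IsMarkov g) :
    ∀ n, π.bind (iterK g n) = π
  | 0 => Measure.bind_dirac
  | n + 1 => by
    have hbind : π.bind g = π := Measure.ext fun A hA => by
      rw [Measure.bind_apply hA hg.measurable.aemeasurable, hπ A hA]
    change π.bind (fun x => (g x).bind (iterK g n)) = π
    rw [← Measure.bind_bind hg.measurable.aemeasurable (hg.measurable_iterK n).aemeasurable,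
      hbind, hπ.bind_iterK hg n]

lemma IsMarkov.lazy (hg : IsMarkov g) : IsMarkov (lazy g) := by
  refine ⟨fun x => ?_, fun A hA => ?_⟩
  · have := hg.1 x
    constructor
    simp [MixHit.lazy, ENNReal.inv_two_add_inv_two]
  · simp only [MixHit.lazy, Measure.add_apply, Measure.smul_apply, smul_eq_mul,
      Measure.dirac_apply' _ hA]
    exact ((hg.2 A hA).const_mul _).add ((measurable_one.indicator hA).const_mul _)

end Markov

section Dbar

lemma tv_le_dbar (t : ℕ) (x y : X) : tv (iterK g t x) (iterK g t y) ≤ dbar g t :=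
  le_iSup₂ (f := fun x y => tv (iterK g t x) (iterK g t y)) x y

lemma dbar_le_one (hg : IsMarkov g) (t : ℕ) : dbar g t ≤ 1 :=
  iSup₂_le fun x y =>
    have := hg.isProbabilityMeasure_iterK t x
    have := hg.isProbabilityMeasure_iterK t y
    tv_le_one

lemma dbar_add_le_mul (hg : IsMarkov g) (s t : ℕ) : dbar g (s + t) ≤ dbar g s * dbar g t := by
  refine iSup₂_le fun x y => ?_
  have := hg.isProbabilityMeasure_iterK s x
  have := hg.isProbabilityMeasure_iterK s y
  rw [hg.iterK_add, hg.iterK_add]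
  exact (tv_bind_le (hg.measurable_iterK t) (tv_le_dbar t)).trans <|
    mul_le_mul_left (tv_le_dbar s x y) _

lemma dbar_antitone (hg : IsMarkov g) : Antitone (dbar g) :=
  antitone_nat_of_succ_le fun t =>
    (dbar_add_le_mul hg t 1).trans (mul_le_of_le_one_right' (dbar_le_one hg 1))

lemma dbar_mul_le_pow (hg : IsMarkov g) (t : ℕ) : ∀ j : ℕ, dbar g (j * t) ≤ dbar g t ^ j
  | 0 => by simpa using dbar_le_one hg 0
  | j + 1 => by
    rw [Nat.succ_mul, pow_succ]
    exact (dbar_add_le_mul hg _ _).trans (mul_le_mul_left (dbar_mul_le_pow hg t j) _)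

lemma tv_iterK_le_dbar (hg : IsMarkov g) {π : Measure X} [IsProbabilityMeasure π]
    (hπ : Stationary g π) (t : ℕ) (x : X) : tv (iterK g t x) π ≤ dbar g t := by
  conv_lhs => rw [← Measure.dirac_bind (hg.measurable_iterK t) x, ← hπ.bind_iterK hg t]
  calc _ ≤ tv (Measure.dirac x) π * dbar g t := tv_bind_le (hg.measurable_iterK t) (tv_le_dbar t)
    _ ≤ dbar g t := mul_le_of_le_one_left' tv_le_one

lemma dbar_le_add_of_tv_le {π : Measure X} {t : ℕ} {e : ℝ≥0∞}
    (ht : ∀ x, tv (iterK g t x) π ≤ e) : dbar g t ≤ e + e :=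
  iSup₂_le fun x y => (tv_triangle _ π _).trans (add_le_add (ht x) (tv_comm π _ ▸ ht y))

end Dbar

section Binomial

lemma sum_range_choose_mul_sq (T : ℕ) :
    ∑ k ∈ range (T + 1), (T.choose k : ℝ) * ((T : ℝ) - 2 * k) ^ 2 = (T : ℝ) * 2 ^ T := by
  induction T with
  | zero => simp
  | succ T ih =>
    have hsum : ∑ k ∈ range (T + 1), (T.choose k : ℝ) = 2 ^ T := by
      exact_mod_cast Nat.sum_range_choose T
    rw [show T + 1 + 1 = T + 2 from rfl,
      sum_choose_succ_mul (fun k _ => (((T + 1 : ℕ) : ℝ) - 2 * k) ^ 2), ← sum_add_distrib]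
    calc ∑ k ∈ range (T + 1), ((T.choose k : ℝ) * (((T + 1 : ℕ) : ℝ) - 2 * k) ^ 2
          + (T.choose k : ℝ) * (((T + 1 : ℕ) : ℝ) - 2 * (k + 1 : ℕ)) ^ 2)
        = 2 * ∑ k ∈ range (T + 1), (T.choose k : ℝ) * ((T : ℝ) - 2 * k) ^ 2
          + 2 * ∑ k ∈ range (T + 1), (T.choose k : ℝ) := by
          rw [mul_sum, mul_sum, ← sum_add_distrib]
          refine sum_congr rfl fun k _ => ?_
          push_cast
          ring
      _ = ((T + 1 : ℕ) : ℝ) * 2 ^ (T + 1) := by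
          rw [ih, hsum]
          push_cast
          ring

/-- Chebyshev's inequality for `Bin(T, 1/2)`, whose variance is `T / 4`. -/
lemma mul_sum_range_choose_le {T s : ℕ} (hs : 4 * s ≤ T) :
    (T : ℝ) * ∑ k ∈ range s, (T.choose k : ℝ) ≤ 4 * 2 ^ T := by
  rcases T.eq_zero_or_pos with rfl | hT
  · simp
  have hT' : (0 : ℝ) < T := by exact_mod_cast hT
  have hfar : ∀ k ∈ range s,
      (T : ℝ) ^ 2 / 4 * T.choose k ≤ T.choose k * ((T : ℝ) - 2 * k) ^ 2 := by
    intro k hk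
    have hk : 4 * (k : ℝ) + 4 ≤ T := by
      have := mem_range.mp hk
      exact_mod_cast (by omega : 4 * k + 4 ≤ T)
    rw [mul_comm]
    gcongr
    nlinarith
  have hvar : (T : ℝ) ^ 2 / 4 * ∑ k ∈ range s, (T.choose k : ℝ) ≤ T * 2 ^ T := by
    rw [mul_sum, ← sum_range_choose_mul_sq]
    refine (sum_le_sum hfar).trans (sum_le_sum_of_subset_of_nonneg ?_ fun _ _ _ => by positivity)
    exact range_subset_range.mpr (by omega)
  nlinarith

lemma sum_range_inv_two_pow_mul_choose_le {T s : ℕ} (hs : 4 * s ≤ T) :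
    ∑ k ∈ range s, 2⁻¹ ^ T * (T.choose k : ℝ≥0∞) ≤ ENNReal.ofReal (4 / T) := by
  have hcast : ∑ k ∈ range s, 2⁻¹ ^ T * (T.choose k : ℝ≥0∞)
      = ENNReal.ofReal (2⁻¹ ^ T * ∑ k ∈ range s, (T.choose k : ℝ)) := by
    rw [← mul_sum, ENNReal.ofReal_mul (by positivity),
      ENNReal.ofReal_sum_of_nonneg fun _ _ => by positivity]
    congr 1
    · rw [ENNReal.ofReal_pow (by norm_num), ENNReal.ofReal_inv_of_pos two_pos, ENNReal.ofReal_ofNat]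
    · simp_rw [ENNReal.ofReal_natCast]
  rw [hcast]
  refine ENNReal.ofReal_le_ofReal ?_
  rcases T.eq_zero_or_pos with rfl | hT
  · simp [show s = 0 by omega]
  rw [le_div_iff₀ (by exact_mod_cast hT), inv_pow, mul_comm, ← mul_assoc, mul_right_comm,
    ← div_eq_mul_inv, div_le_iff₀ (by positivity)]
  exact mul_sum_range_choose_le hs

end Binomial

section Lazy

/-- After `T` lazy steps the chain has made a `Bin(T, 1/2)`-distributed number of `g`-steps. -/
lemma iterK_lazy_apply (hg : IsMarkov g) (T : ℕ) (x : X) {A : Set X} (hA : MeasurableSet A) :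
    iterK (lazy g) T x A = 2⁻¹ ^ T * ∑ k ∈ range (T + 1), T.choose k * iterK g k x A := by
  induction T generalizing x with
  | zero => simp [iterK]
  | succ T ih =>
    have hstep : ∫⁻ y, iterK (lazy g) T y A ∂(g x)
        = 2⁻¹ ^ T * ∑ k ∈ range (T + 1), T.choose k * iterK g (k + 1) x A := by
      simp_rw [ih, iterK, Measure.bind_apply hA (hg.measurable_iterK _).aemeasurable]
      rw [lintegral_const_mul' _ _ (ENNReal.pow_ne_top (by simp)), lintegral_finsetSum _
        fun k _ => (hg.measurable_iterK_apply k hA).const_mul _]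
      simp_rw [lintegral_const_mul' _ _ (ENNReal.natCast_ne_top _)]
    rw [iterK, Measure.bind_apply hA (hg.lazy.measurable_iterK T).aemeasurable, lazy,
      lintegral_add_measure, lintegral_smul_measure, lintegral_smul_measure,
      lintegral_dirac' x (hg.lazy.measurable_iterK_apply T hA), hstep, ih,
      show T + 1 + 1 = T + 2 from rfl, sum_choose_succ_mul (fun k _ => iterK g k x A)]
    simp only [smul_eq_mul]
    ring

lemma tv_iterK_lazy_le (hg : IsMarkov g) {π : Measure X} [IsProbabilityMeasure π]
    (hπ : Stationary g π) {T s : ℕ} (hs : 4 * s ≤ T) (x : X) :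
    tv (iterK (lazy g) T x) π ≤ ENNReal.ofReal (4 / T) + dbar g s := by
  set w : ℕ → ℝ≥0∞ := fun k => 2⁻¹ ^ T * T.choose k
  have hw : ∑ k ∈ range (T + 1), w k = 1 := by
    rw [← mul_sum, ← Nat.cast_sum, Nat.sum_range_choose, Nat.cast_pow, Nat.cast_ofNat, ← mul_pow,
      ENNReal.inv_mul_cancel two_ne_zero ofNat_ne_top, one_pow]
  have hsplit := sum_range_add_sum_Ico (fun k => w k * tv (iterK g k x) π) (by omega : s ≤ T + 1)
  calc tv (iterK (lazy g) T x) π ≤ ∑ k ∈ range (T + 1), w k * tv (iterK g k x) π :=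
        tv_le_sum_mul hw fun A hA => by
          simp only [iterK_lazy_apply hg T x hA, w, mul_sum, mul_assoc]
    _ ≤ ∑ k ∈ range s, w k + ∑ k ∈ Ico s (T + 1), w k * dbar g s := by
        rw [← hsplit]
        gcongr with k _ k hk
        · have := hg.isProbabilityMeasure_iterK k x
          exact mul_le_of_le_one_right' tv_le_one
        · exact (tv_iterK_le_dbar hg hπ k x).trans (dbar_antitone hg (mem_Ico.1 hk).1)
    _ ≤ ENNReal.ofReal (4 / T) + dbar g s := by
        gcongr
        · exact sum_range_inv_two_pow_mul_choose_le hs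
        · rw [← sum_mul]
          refine mul_le_of_le_one_left' (hw ▸ sum_le_sum_of_subset ?_)
          exact fun k hk => mem_range.2 (mem_Ico.1 hk).2

lemma tv_iterK_lazy_mul_le (hg : IsMarkov g) {π : Measure X} [IsProbabilityMeasure π]
    (hπ : Stationary g π) {ε : ℝ} (hε : 0 ≤ ε) {j m t : ℕ} (hj : (2 * ε) ^ j ≤ ε / 2)
    (hjm : 4 * j ≤ m) (hm : 8 ≤ ε * m) (ht : ∀ x, tv (iterK g t x) π ≤ ENNReal.ofReal ε)
    (x : X) : tv (iterK (lazy g) (m * t) x) π ≤ ENNReal.ofReal ε := by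
  rcases t.eq_zero_or_pos with rfl | htpos
  · exact ht x
  have htail : 4 / ((m * t : ℕ) : ℝ) ≤ ε / 2 := by
    have hmt : (m : ℝ) ≤ m * t :=
      le_mul_of_one_le_right (Nat.cast_nonneg m) (by exact_mod_cast htpos)
    rw [Nat.cast_mul, div_le_iff₀ (by nlinarith)]
    nlinarith
  have hdbar : dbar g (j * t) ≤ ENNReal.ofReal (ε / 2) :=
    calc dbar g (j * t) ≤ dbar g t ^ j := dbar_mul_le_pow hg t j
      _ ≤ ENNReal.ofReal ((2 * ε) ^ j) := by
        rw [ENNReal.ofReal_pow (by positivity), two_mul, ENNReal.ofReal_add hε hε]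
        gcongr
        exact dbar_le_add_of_tv_le ht
      _ ≤ ENNReal.ofReal (ε / 2) := ENNReal.ofReal_le_ofReal hj
  calc tv (iterK (lazy g) (m * t) x) π
      ≤ ENNReal.ofReal (4 / ((m * t : ℕ) : ℝ)) + dbar g (j * t) :=
        tv_iterK_lazy_le hg hπ (by nlinarith) x
    _ ≤ ENNReal.ofReal (ε / 2) + ENNReal.ofReal (ε / 2) :=
        add_le_add (ENNReal.ofReal_le_ofReal htail) hdbar
    _ = ENNReal.ofReal ε := by rw [← ENNReal.ofReal_add (by positivity) (by positivity), add_halves]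

lemma mixTime_le_mul {g' : X → Measure X} {π : Measure X} {e : ℝ≥0∞} {m : ℕ} (hm : m ≠ 0)
    (h : ∀ t, (∀ x, tv (iterK g t x) π ≤ e) → ∀ x, tv (iterK g' (m * t) x) π ≤ e) :
    mixTime g' π e ≤ m * mixTime g π e := by
  have hm₀ : (m : ℝ≥0∞) ≠ 0 := by exact_mod_cast hm
  rw [mixTime, mixTime, ENNReal.mul_iInf_of_ne hm₀ (natCast_ne_top m)]
  refine le_iInf fun t => ?_
  rw [ENNReal.mul_iInf_of_ne hm₀ (natCast_ne_top m)]
  exact le_iInf fun ht => iInf₂_le_of_le (m * t) (h t ht) (by push_cast; rfl)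

end Lazy

/-- the lazy mixing time is bounded by a constant (depending only on
`ε`) multiple of the mixing time. -/
theorem stmt15 (ε : ℝ) (hε0 : 0 < ε) (hε1 : ε < 1 / 2) :
    ∃ C : ℝ, 0 < C ∧
      ∀ (X : Type) [MetricSpace X] [MeasurableSpace X] [BorelSpace X]
        [SigmaCompactSpace X] (g : X → Measure X) (π : Measure X),
        IsMarkov g → IsProbabilityMeasure π → Stationary g π →
        mixTime (lazy g) π (ENNReal.ofReal ε) ≤
          ENNReal.ofReal C * mixTime g π (ENNReal.ofReal ε) := by
  obtain ⟨j, hj⟩ := exists_pow_lt_of_lt_one (by linarith : 0 < ε / 2) (by linarith : 2 * ε < 1)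
  set m := 4 * j + ⌈8 / ε⌉₊
  have hm : 8 ≤ ε * m := by
    have : 8 / ε ≤ m := (Nat.le_ceil _).trans (by simp [m])
    rwa [div_le_iff₀ hε0, mul_comm] at this
  have hm₀ : 0 < m := by
    by_contra! h
    simp only [Nat.le_zero.mp h, Nat.cast_zero, mul_zero] at hm
    linarith
  refine ⟨m, by exact_mod_cast hm₀, fun X _ _ _ _ g π hg hπ hst => ?_⟩
  rw [ENNReal.ofReal_natCast]
  exact mixTime_le_mul hm₀.ne' fun t ht =>
    tv_iterK_lazy_mul_le hg hst hε0.le hj.le (by omega) hm ht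
end MixHit
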